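/- arXiv:1312.1084 — 3 statements merged into one kernel-verified Lean document; each statement's English description precedes it below -/
import Mathlib

section
/- The set G_III₂ of complex 5×5 matrices of the form [[a,0,0,0,0],[0,conj(a),0,0,0],[b,conj(b),a·conj(a),0,0],[e,d,c,a²·conj(a),0],[k,h,g,f,a³·conj(a)]] with a ∈ ℂ\{0} and b,c,d,e,f,g,h,k ∈ ℂ is a subgroup of GL₅(ℂ). -/
/-!
Multiplying two matrices of this shape gives one of the same shape, with parameter `a a'` and
the other parameters given by explicit polynomials. In that product formula each of
`b', …, k'` enters one entry, linearly, with the nonzero diagonal coefficient `a ^ i * conj a`,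
after parameters already fixed; so for `a ≠ 0` the equations `Q * Q' = 1` can be solved one
parameter at a time, and the right inverse found this way is the inverse in `GL₅(ℂ)`.
-/

open Matrix ComplexConjugate

noncomputable def QIII₂ (a b c d e f g h k : ℂ) : Matrix (Fin 5) (Fin 5) ℂ :=
  !![a, 0, 0, 0, 0;
     0, conj a, 0, 0, 0;
     b, conj b, a * conj a, 0, 0;
     e, d, c, a ^ 2 * conj a, 0;
     k, h, g, f, a ^ 3 * conj a]

lemma QIII₂_one : QIII₂ 1 0 0 0 0 0 0 0 0 = 1 := by
  ext i j
  fin_cases i <;> fin_cases j <;> simp [QIII₂]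

lemma QIII₂_mul (a b c d e f g h k a' b' c' d' e' f' g' h' k' : ℂ) :
    QIII₂ a b c d e f g h k * QIII₂ a' b' c' d' e' f' g' h' k' =
    QIII₂ (a * a') (b * a' + a * conj a * b')
      (c * (a' * conj a') + a ^ 2 * conj a * c')
      (d * conj a' + c * conj b' + a ^ 2 * conj a * d')
      (e * a' + c * b' + a ^ 2 * conj a * e')
      (f * (a' ^ 2 * conj a') + a ^ 3 * conj a * f')
      (g * (a' * conj a') + f * c' + a ^ 3 * conj a * g')
      (h * conj a' + g * conj b' + f * d' + a ^ 3 * conj a * h')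
      (k * a' + g * b' + f * e' + a ^ 3 * conj a * k') := by
  ext i j
  fin_cases i <;> fin_cases j <;>
    simp only [QIII₂, mul_apply, Fin.sum_univ_five, of_apply, cons_val', cons_val_fin_one,
      cons_val, cons_val_zero, cons_val_one, Fin.isValue, Fin.zero_eta, Fin.mk_one,
      Fin.reduceFinMk, map_mul, map_add, Complex.conj_conj] <;>
    ring

lemma exists_add_mul_eq_zero {K : Type*} [DivisionRing K] {u : K} (hu : u ≠ 0) (x : K) :
    ∃ y, x + u * y = 0 :=
  ⟨-(u⁻¹ * x), by rw [mul_neg, mul_inv_cancel_left₀ hu, add_neg_cancel]⟩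

lemma exists_QIII₂_mul_eq_one {a : ℂ} (ha : a ≠ 0) (b c d e f g h k : ℂ) :
    ∃ a' b' c' d' e' f' g' h' k' : ℂ, a' ≠ 0 ∧
      QIII₂ a b c d e f g h k * QIII₂ a' b' c' d' e' f' g' h' k' = 1 := by
  have hconj : conj a ≠ 0 := (map_ne_zero _).mpr ha
  have h1 : a * conj a ≠ 0 := mul_ne_zero ha hconj
  have h2 : a ^ 2 * conj a ≠ 0 := mul_ne_zero (pow_ne_zero 2 ha) hconj
  have h3 : a ^ 3 * conj a ≠ 0 := mul_ne_zero (pow_ne_zero 3 ha) hconj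
  set a' := a⁻¹
  obtain ⟨b', hb⟩ := exists_add_mul_eq_zero h1 (b * a')
  obtain ⟨c', hc⟩ := exists_add_mul_eq_zero h2 (c * (a' * conj a'))
  obtain ⟨d', hd⟩ := exists_add_mul_eq_zero h2 (d * conj a' + c * conj b')
  obtain ⟨e', he⟩ := exists_add_mul_eq_zero h2 (e * a' + c * b')
  obtain ⟨f', hf⟩ := exists_add_mul_eq_zero h3 (f * (a' ^ 2 * conj a'))
  obtain ⟨g', hg⟩ := exists_add_mul_eq_zero h3 (g * (a' * conj a') + f * c')
  obtain ⟨h', hh⟩ := exists_add_mul_eq_zero h3 (h * conj a' + g * conj b' + f * d')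
  obtain ⟨k', hk⟩ := exists_add_mul_eq_zero h3 (k * a' + g * b' + f * e')
  refine ⟨a', b', c', d', e', f', g', h', k', inv_ne_zero ha, ?_⟩
  rw [QIII₂_mul, mul_inv_cancel₀ ha, hb, hc, hd, he, hf, hg, hh, hk, QIII₂_one]

def QIII₂Subgroup : Subgroup (GL (Fin 5) ℂ) where
  carrier := {x | ∃ a b c d e f g h k : ℂ, a ≠ 0 ∧
    (x : Matrix (Fin 5) (Fin 5) ℂ) = QIII₂ a b c d e f g h k}
  one_mem' := ⟨1, 0, 0, 0, 0, 0, 0, 0, 0, one_ne_zero, QIII₂_one.symm⟩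
  mul_mem' := by
    rintro x y ⟨a, b, c, d, e, f, g, h, k, ha, hx⟩
      ⟨a', b', c', d', e', f', g', h', k', ha', hy⟩
    exact ⟨_, _, _, _, _, _, _, _, _, mul_ne_zero ha ha',
      by rw [Units.val_mul, hx, hy, QIII₂_mul]⟩
  inv_mem' := by
    rintro x ⟨a, b, c, d, e, f, g, h, k, ha, hx⟩
    obtain ⟨a', b', c', d', e', f', g', h', k', ha', hinv⟩ :=
      exists_QIII₂_mul_eq_one ha b c d e f g h k
    exact ⟨a', b', c', d', e', f', g', h', k', ha',
      Units.inv_eq_of_mul_eq_one_right (hx ▸ hinv)⟩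

/-- The set of matrices `Q(a,b,c,d,e,f,g,h,k)`, `a ≠ 0`, is a subgroup of `GL₅(ℂ)`. -/
theorem stmt9 :
    ∃ H : Subgroup (GL (Fin 5) ℂ),
      ∀ gl : GL (Fin 5) ℂ,
        gl ∈ H ↔ ∃ a b c d e f g h k : ℂ, a ≠ 0 ∧
          (gl : Matrix (Fin 5) (Fin 5) ℂ) = QIII₂ a b c d e f g h k :=
  ⟨QIII₂Subgroup, fun _ => Iff.rfl⟩
end

section
/- For nonzero a₁,a₂ ∈ ℂ and scalars b_i,c_i,d_i,e_i,f_i,g_i,h_i,k_i ∈ ℂ, the product Q(a₁,…,k₁)·Q(a₂,…,k₂) equals Q(a₃,…,k₃) where a₃ = a₁a₂, b₃ = b₁a₂ + a₁conj(a₁)b₂, c₃ = c₁a₂conj(a₂) + a₁²conj(a₁)c₂, d₃ = d₁conj(a₂) + c₁conj(b₂) + a₁²conj(a₁)d₂, e₃ = e₁a₂ + c₁b₂ + a₁²conj(a₁)e₂, f₃ = f₁a₂²conj(a₂) + a₁³conj(a₁)f₂, g₃ = g₁a₂conj(a₂) + f₁c₂ + a₁³conj(a₁)g₂, h₃ = h₁conj(a₂)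 + g₁conj(b₂) + f₁d₂ + a₁³conj(a₁)h₂, k₃ = k₁a₂ + g₁b₂ + f₁e₂ + a₁³conj(a₁)k₂. -/
open Matrix ComplexConjugate

theorem stmt10_general (a₁ a₂ b₁ b₂ c₁ c₂ d₁ d₂ e₁ e₂ f₁ f₂ g₁ g₂ h₁ h₂ k₁ k₂ : ℂ) :
    QIII₂ a₁ b₁ c₁ d₁ e₁ f₁ g₁ h₁ k₁ * QIII₂ a₂ b₂ c₂ d₂ e₂ f₂ g₂ h₂ k₂ =
      QIII₂ (a₁ * a₂)
        (b₁ * a₂ + a₁ * conj a₁ * b₂)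
        (c₁ * a₂ * conj a₂ + a₁ ^ 2 * conj a₁ * c₂)
        (d₁ * conj a₂ + c₁ * conj b₂ + a₁ ^ 2 * conj a₁ * d₂)
        (e₁ * a₂ + c₁ * b₂ + a₁ ^ 2 * conj a₁ * e₂)
        (f₁ * a₂ ^ 2 * conj a₂ + a₁ ^ 3 * conj a₁ * f₂)
        (g₁ * a₂ * conj a₂ + f₁ * c₂ + a₁ ^ 3 * conj a₁ * g₂)
        (h₁ * conj a₂ + g₁ * conj b₂ + f₁ * d₂ + a₁ ^ 3 * conj a₁ * h₂)
        (k₁ * a₂ + g₁ * b₂ + f₁ * e₂ + a₁ ^ 3 * conj a₁ * k₂) := by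
  ext i j
  fin_cases i <;> fin_cases j <;>
    simp only [QIII₂, mul_apply, Fin.sum_univ_five, of_apply, cons_val', cons_val, cons_val_zero,
      cons_val_one, cons_val_fin_one, Fin.isValue, Fin.zero_eta, Fin.mk_one, Fin.reduceFinMk,
      map_add, map_mul, Complex.conj_conj] <;>
    ring

theorem stmt10 (a₁ a₂ b₁ b₂ c₁ c₂ d₁ d₂ e₁ e₂ f₁ f₂ g₁ g₂ h₁ h₂ k₁ k₂ : ℂ)
    (ha₁ : a₁ ≠ 0) (ha₂ : a₂ ≠ 0) :
    QIII₂ a₁ b₁ c₁ d₁ e₁ f₁ g₁ h₁ k₁ * QIII₂ a₂ b₂ c₂ d₂ e₂ f₂ g₂ h₂ k₂ =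
      QIII₂ (a₁ * a₂)
        (b₁ * a₂ + a₁ * conj a₁ * b₂)
        (c₁ * a₂ * conj a₂ + a₁ ^ 2 * conj a₁ * c₂)
        (d₁ * conj a₂ + c₁ * conj b₂ + a₁ ^ 2 * conj a₁ * d₂)
        (e₁ * a₂ + c₁ * b₂ + a₁ ^ 2 * conj a₁ * e₂)
        (f₁ * a₂ ^ 2 * conj a₂ + a₁ ^ 3 * conj a₁ * f₂)
        (g₁ * a₂ * conj a₂ + f₁ * c₂ + a₁ ^ 3 * conj a₁ * g₂)
        (h₁ * conj a₂ + g₁ * conj b₂ + f₁ * d₂ + a₁ ^ 3 * conj a₁ * h₂)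
        (k₁ * a₂ + g₁ * b₂ + f₁ * e₂ + a₁ ^ 3 * conj a₁ * k₂) :=
  stmt10_general a₁ a₂ b₁ b₂ c₁ c₂ d₁ d₂ e₁ e₂ f₁ f₂ g₁ g₂ h₁ h₂ k₁ k₂
end

section
/- The set G_IV₂ of complex 5×5 matrices of the form [[c,0,0,0,0],[b,a,0,0,0],[0,0,conj(c),0,0],[0,0,conj(b),conj(a),0],[e,d,conj(e),conj(d),a·conj(a)]] with a,c ∈ ℂ\{0} and b,d,e ∈ ℂ is a subgroup of GL₅(ℂ). -/
open Matrix ComplexConjugate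

noncomputable def SIV₂ (a b c d e : ℂ) : Matrix (Fin 5) (Fin 5) ℂ :=
  !![c, 0, 0, 0, 0;
     b, a, 0, 0, 0;
     0, 0, conj c, 0, 0;
     0, 0, conj b, conj a, 0;
     e, d, conj e, conj d, a * conj a]

theorem SIV₂_mul_SIV₂ (a b c d e a' b' c' d' e' : ℂ) :
    SIV₂ a b c d e * SIV₂ a' b' c' d' e' =
      SIV₂ (a * a') (b * c' + a * b') (c * c') (d * a' + a * conj a * d')
        (e * c' + d * b' + a * conj a * e') := by
  ext i j
  -- keep `simp` from cancelling common factors into disjunctions that `ring` cannot close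
  fin_cases i <;> fin_cases j <;>
    simp [SIV₂, mul_apply, Fin.sum_univ_five, -mul_eq_mul_left_iff, -mul_eq_mul_right_iff] <;> ring

theorem SIV₂_one_zero_one_zero_zero : SIV₂ 1 0 1 0 0 = 1 := by
  ext i j
  fin_cases i <;> fin_cases j <;> simp [SIV₂]

theorem SIV₂_inv {a c : ℂ} (ha : a ≠ 0) (hc : c ≠ 0) (b d e : ℂ) :
    (SIV₂ a b c d e)⁻¹ = SIV₂ a⁻¹ (-b / (a * c)) c⁻¹ (-d / (a * a * conj a))
      ((d * b - e * a) / (a * a * conj a * c)) := by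
  have ha' : conj a ≠ 0 := (map_ne_zero _).mpr ha
  refine inv_eq_right_inv ?_
  rw [SIV₂_mul_SIV₂, ← SIV₂_one_zero_one_zero_zero]
  congr 1 <;> field_simp <;> ring

def SIV₂Subgroup : Subgroup (GL (Fin 5) ℂ) where
  carrier :=
    {g | ∃ a b c d e : ℂ, a ≠ 0 ∧ c ≠ 0 ∧ (g : Matrix (Fin 5) (Fin 5) ℂ) = SIV₂ a b c d e}
  one_mem' := ⟨1, 0, 1, 0, 0, one_ne_zero, one_ne_zero, SIV₂_one_zero_one_zero_zero.symm⟩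
  mul_mem' := by
    rintro g h ⟨a, b, c, d, e, ha, hc, hg⟩ ⟨a', b', c', d', e', ha', hc', hh⟩
    exact ⟨_, _, _, _, _, mul_ne_zero ha ha', mul_ne_zero hc hc',
      by rw [Units.val_mul, hg, hh, SIV₂_mul_SIV₂]⟩
  inv_mem' := by
    rintro g ⟨a, b, c, d, e, ha, hc, hg⟩
    exact ⟨_, _, _, _, _, inv_ne_zero ha, inv_ne_zero hc,
      by rw [coe_units_inv, hg, SIV₂_inv ha hc]⟩

/-- The set of matrices `S(a,b,c,d,e)`, `a ≠ 0`, `c ≠ 0`, is a subgroup of `GL₅(ℂ)`. -/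
theorem stmt14 :
    ∃ H : Subgroup (GL (Fin 5) ℂ),
      ∀ g : GL (Fin 5) ℂ,
        g ∈ H ↔ ∃ a b c d e : ℂ, a ≠ 0 ∧ c ≠ 0 ∧
          (g : Matrix (Fin 5) (Fin 5) ℂ) = SIV₂ a b c d e :=
  ⟨SIV₂Subgroup, fun _ => Iff.rfl⟩
end
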